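/- arXiv:math/0003155 — 7 statements merged into one kernel-verified Lean document; each statement's English description precedes it below -/
import Mathlib

section
/- Let C be a constructible subset of a Noetherian topological space X. Then C admits a presentation as a disjoint union ⋃_{i=1}^m (V_i' \ V_i''), where all V_i' and V_i'' are closed, V_1' ⊇ V_1'' ⊇ V_2' ⊇ V_2'' ⊇ ... ⊇ V_m' ⊇ V_m'', and no two consecutive sets in this chain share an irreducible component. -/
/-!
Take `V'₀ = closure C`, `V''₀ = closure (V'₀ \ C)` and recurse on `C ∩ V''₀`, whose closure is
strictly smaller; Noetherian induction ends the recursion.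

Consecutive sets share no irreducible component because a constructible set `D` contains a
nonempty open piece `T ∩ U` of every irreducible component `T` of its closure: on an irreducible
set a constructible set is generically all or nothing, and `D ∩ T` is dense in `T`. Applied to
`D` and to the constructible set `closure D \ D`, irreducibility of `T` makes the two pieces meet,
which is absurd; so `T ⊄ closure (closure D \ D)`. For `D = C` this separates `V'₀` from `V''₀`,
and for `D = V'₀ \ C`, where `closure D \ D = C ∩ V''₀`, it separates `V''₀` from `V'₁`.
-/

open Set TopologicalSpace

variable {X : Type*} [TopologicalSpace X]

/-- A set is locally closed iff it is the difference of two closed sets. -/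
def PaperLocallyClosed (s : Set X) : Prop :=
  ∃ V W : Set X, IsClosed V ∧ IsClosed W ∧ s = V \ W

/-- A set is constructible iff it is a finite union of locally closed sets. -/
def PaperConstructible (s : Set X) : Prop :=
  ∃ (m : ℕ) (V : Fin m → Set X), (∀ i, PaperLocallyClosed (V i)) ∧ s = ⋃ i, V i

/-- `T` is an irreducible component of `V`: a maximal irreducible closed subset of `V`. -/
def IsIrredCompOf (T V : Set X) : Prop :=
  IsClosed T ∧ IsIrreducible T ∧ T ⊆ V ∧
    ∀ T' : Set X, IsClosed T' → IsIrreducible T' → T' ⊆ V → T ⊆ T' → T' = T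

open Topology

lemma IsIrreducible.exists_mem_subset_of_subset_biUnion {ι : Type*} {T : Set X} {I : Set ι}
    {f : ι → Set X} (hT : IsIrreducible T) (hI : I.Finite) (hf : ∀ i ∈ I, IsClosed (f i))
    (hTf : T ⊆ ⋃ i ∈ I, f i) : ∃ i ∈ I, T ⊆ f i := by
  classical
  lift I to Finset ι using hI
  obtain ⟨t, ht, hTt⟩ := isIrreducible_iff_sUnion_isClosed.1 hT (I.image f)
    (by simpa using hf) (by simpa [sUnion_image] using hTf)
  obtain ⟨i, hi, rfl⟩ := Finset.mem_image.1 ht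
  exact ⟨i, hi, hTt⟩

lemma Topology.IsConstructible.exists_isOpen_inter_subset_or_subset_compl {s T : Set X}
    (hs : IsConstructible s) (hT : IsIrreducible T) :
    ∃ U, IsOpen U ∧ (T ∩ U).Nonempty ∧ (T ∩ U ⊆ s ∨ T ∩ U ⊆ sᶜ) := by
  induction hs using IsConstructible.empty_union_induction with
  | open_retrocompact U hU _ =>
    by_cases hTU : (T ∩ U).Nonempty
    · exact ⟨U, hU, hTU, .inl inter_subset_right⟩
    · refine ⟨univ, isOpen_univ, by simpa using hT.nonempty, .inr ?_⟩
      exact fun x hx hxU => hTU ⟨x, hx.1, hxU⟩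
  | union s _ t _ ihs iht =>
    obtain ⟨U, hU, hTU, hUs | hUs⟩ := ihs
    · exact ⟨U, hU, hTU, .inl (hUs.trans subset_union_left)⟩
    obtain ⟨V, hV, hTV, hVt | hVt⟩ := iht
    · exact ⟨V, hV, hTV, .inl (hVt.trans subset_union_right)⟩
    refine ⟨U ∩ V, hU.inter hV, hT.isPreirreducible U V hU hV hTU hTV, .inr ?_⟩
    rw [compl_union]
    exact subset_inter ((inter_subset_inter_right T inter_subset_left).trans hUs)
      ((inter_subset_inter_right T inter_subset_right).trans hVt)
  | compl s _ ih =>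
    obtain ⟨U, hU, hTU, hUs⟩ := ih
    exact ⟨U, hU, hTU, by rwa [compl_compl, or_comm]⟩

section Noetherian

variable [NoetherianSpace X]

lemma TopologicalSpace.NoetherianSpace.isConstructible_of_isClosed {F : Set X} (hF : IsClosed F) :
    IsConstructible F :=
  isConstructible_compl.1 ((NoetherianSpace.isCompact _).isConstructible hF.isOpen_compl)

lemma PaperConstructible.isConstructible {s : Set X} (hs : PaperConstructible s) :
    IsConstructible s := by
  obtain ⟨m, V, hV, rfl⟩ := hs
  refine .iUnion fun i => ?_
  obtain ⟨A, B, hA, hB, hAB⟩ := hV i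
  rw [hAB]
  exact (NoetherianSpace.isConstructible_of_isClosed hA).sdiff
    (NoetherianSpace.isConstructible_of_isClosed hB)

lemma IsClosed.exists_isIrredCompOf {F : Set X} (hF : IsClosed F) (hne : F.Nonempty) :
    ∃ T, IsIrredCompOf T F := by
  obtain ⟨S, hSf, hSc, hSi, rfl⟩ := NoetherianSpace.exists_finite_set_isClosed_irreducible hF
  obtain ⟨T, hT⟩ := hSf.exists_maximal hne.of_sUnion
  refine ⟨T, hSc T hT.prop, hSi T hT.prop, subset_sUnion_of_mem hT.prop, ?_⟩
  intro T' _ hT'i hT'S hTT'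
  obtain ⟨t, htS, hT't⟩ :=
    hT'i.exists_mem_subset_of_subset_biUnion hSf hSc (by rwa [← sUnion_eq_biUnion])
  exact (hT't.trans (hT.le_of_ge htS (hTT'.trans hT't))).antisymm hTT'

end Noetherian

namespace IsIrredCompOf

variable {s T : Set X}

lemma isIrreducible {V : Set X} (h : IsIrredCompOf T V) : IsIrreducible T := h.2.1

lemma subset {V : Set X} (h : IsIrredCompOf T V) : T ⊆ V := h.2.2.1

lemma of_subset {A B : Set X} (h : IsIrredCompOf T B) (hAB : A ⊆ B) (hTA : T ⊆ A) :
    IsIrredCompOf T A :=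
  ⟨h.1, h.2.1, hTA, fun T' hT'c hT'i hT'A hTT' => h.2.2.2 T' hT'c hT'i (hT'A.trans hAB) hTT'⟩

variable [NoetherianSpace X]

lemma subset_closure_inter (hT : IsIrredCompOf T (closure s)) : T ⊆ closure (s ∩ T) := by
  obtain ⟨S, hSf, hSc, hSi, hS⟩ :=
    NoetherianSpace.exists_finite_set_isClosed_irreducible (isClosed_closure (s := s))
  have hcover : closure s = ⋃ t ∈ S, closure (s ∩ t) := by
    rw [← hSf.closure_biUnion, ← inter_iUnion₂, ← sUnion_eq_biUnion, ← hS,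
      inter_eq_left.2 subset_closure]
  obtain ⟨t, htS, hTt⟩ := hT.isIrreducible.exists_mem_subset_of_subset_biUnion hSf
    (fun _ _ => isClosed_closure) (hcover ▸ hT.subset)
  have htT : t = T := hT.2.2.2 t (hSc t htS) (hSi t htS) (hS ▸ subset_sUnion_of_mem htS)
    (hTt.trans (closure_minimal inter_subset_right (hSc t htS)))
  subst htT
  exact hTt

lemma exists_isOpen_inter_subset (hs : IsConstructible s) (hT : IsIrredCompOf T (closure s)) :
    ∃ U, IsOpen U ∧ (T ∩ U).Nonempty ∧ T ∩ U ⊆ s := by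
  obtain ⟨U, hU, hTU, hUs | hUs⟩ := hs.exists_isOpen_inter_subset_or_subset_compl hT.isIrreducible
  · exact ⟨U, hU, hTU, hUs⟩
  obtain ⟨x, ⟨hxs, hxT⟩, hxU⟩ := (closure_inter_open_nonempty_iff hU).1
    (hTU.mono (inter_subset_inter_left U hT.subset_closure_inter))
  exact absurd hxs (hUs ⟨hxT, hxU⟩)

lemma not_subset_closure_closure_diff (hs : IsConstructible s)
    (hT : IsIrredCompOf T (closure s)) : ¬ T ⊆ closure (closure s \ s) := by
  intro hTD
  have hD : IsConstructible (closure s \ s) :=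
    (NoetherianSpace.isConstructible_of_isClosed isClosed_closure).sdiff hs
  obtain ⟨U, hU, hTU, hUs⟩ := hT.exists_isOpen_inter_subset hs
  obtain ⟨V, hV, hTV, hVD⟩ := (hT.of_subset (closure_minimal sdiff_subset isClosed_closure)
    hTD).exists_isOpen_inter_subset hD
  obtain ⟨x, hxT, hxU, hxV⟩ := hT.isIrreducible.isPreirreducible U V hU hV hTU hTV
  exact (hVD ⟨hxT, hxV⟩).2 (hUs ⟨hxT, hxU⟩)

end IsIrredCompOf

structure IsCanonicalChain {m : ℕ} (V' V'' : Fin m → Set X) : Prop where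
  isClosed_upper : ∀ i, IsClosed (V' i)
  isClosed_lower : ∀ i, IsClosed (V'' i)
  lower_subset_upper : ∀ i, V'' i ⊆ V' i
  upper_succ_subset_lower : ∀ i : Fin m, ∀ h : i.1 + 1 < m, V' ⟨i.1 + 1, h⟩ ⊆ V'' i
  not_isIrredCompOf_lower :
    ∀ i : Fin m, ∀ T : Set X, IsIrredCompOf T (V' i) → ¬ IsIrredCompOf T (V'' i)
  not_isIrredCompOf_upper_succ : ∀ i : Fin m, ∀ h : i.1 + 1 < m, ∀ T : Set X,
    IsIrredCompOf T (V'' i) → ¬ IsIrredCompOf T (V' ⟨i.1 + 1, h⟩)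

namespace IsCanonicalChain

variable {m : ℕ} {V' V'' : Fin m → Set X}

lemma nil (V' V'' : Fin 0 → Set X) : IsCanonicalChain V' V'' :=
  ⟨finZeroElim, finZeroElim, finZeroElim, finZeroElim, finZeroElim, finZeroElim⟩

lemma cons {F W : Set X} (h : IsCanonicalChain V' V'') (hF : IsClosed F) (hW : IsClosed W)
    (hWF : W ⊆ F) (hV'W : ∀ i, V' i ⊆ W) (hFW : ∀ T, IsIrredCompOf T F → ¬ IsIrredCompOf T W)
    (hWV' : ∀ (h : 0 < m) T, IsIrredCompOf T W → ¬ IsIrredCompOf T (V' ⟨0, h⟩)) :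
    IsCanonicalChain (Fin.cons F V' : Fin (m + 1) → Set X) (Fin.cons W V'') where
  isClosed_upper := Fin.cases hF h.isClosed_upper
  isClosed_lower := Fin.cases hW h.isClosed_lower
  lower_subset_upper := Fin.cases hWF h.lower_subset_upper
  upper_succ_subset_lower := by
    rintro ⟨_ | k, hk⟩ hk'
    · exact hV'W _
    · exact h.upper_succ_subset_lower ⟨k, by omega⟩ _
  not_isIrredCompOf_lower := Fin.cases hFW h.not_isIrredCompOf_lower
  not_isIrredCompOf_upper_succ := by
    rintro ⟨_ | k, hk⟩ hk'
    · exact hWV' _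
    · exact h.not_isIrredCompOf_upper_succ ⟨k, by omega⟩ _

lemma upper_subset_lower_of_lt (h : IsCanonicalChain V' V'') {i j : Fin m} (hij : i < j) :
    V' j ⊆ V'' i := by
  obtain ⟨j, hj⟩ := j
  induction j with
  | zero => exact absurd hij (Nat.not_lt_zero _)
  | succ k ih =>
    by_cases hik : i.1 < k
    · exact (h.upper_succ_subset_lower ⟨k, by omega⟩ hj).trans
        ((h.lower_subset_upper _).trans (ih (by omega) hik))
    · have hik' : i.1 < k + 1 := hij
      rw [show i = ⟨k, by omega⟩ from Fin.ext (show i.1 = k by omega)]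
      exact h.upper_succ_subset_lower ⟨k, by omega⟩ hj

lemma pairwise_disjoint (h : IsCanonicalChain V' V'') :
    ∀ i j : Fin m, i ≠ j → Disjoint (V' i \ V'' i) (V' j \ V'' j) := by
  have hlt : ∀ i j : Fin m, i < j → Disjoint (V' i \ V'' i) (V' j \ V'' j) := fun i j hij =>
    disjoint_left.2 fun _ hxi hxj => hxi.2 (h.upper_subset_lower_of_lt hij hxj.1)
  intro i j hij
  rcases hij.lt_or_gt with hij | hji
  · exact hlt i j hij
  · exact (hlt j i hji).symm

end IsCanonicalChain

lemma Fin.iUnion_cons_diff_cons {α : Type*} {m : ℕ} (A B : Set α) (f g : Fin m → Set α) :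
    ⋃ i, (Fin.cons A f : Fin (m + 1) → Set α) i \ (Fin.cons B g : Fin (m + 1) → Set α) i =
      (A \ B) ∪ ⋃ i, f i \ g i := by
  ext x
  simp only [mem_iUnion, mem_union, Fin.exists_fin_succ, Fin.cons_zero, Fin.cons_succ]

lemma closure_diff_union_inter_closure_closure_diff (s : Set X) :
    (closure s \ closure (closure s \ s)) ∪ (closure (closure s \ s) ∩ s) = s := by
  ext x
  constructor
  · rintro (⟨hx, hxW⟩ | ⟨_, hxs⟩)
    · by_contra hxs
      exact hxW (subset_closure ⟨hx, hxs⟩)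
    · exact hxs
  · intro hxs
    by_cases hxW : x ∈ closure (closure s \ s)
    · exact .inr ⟨hxW, hxs⟩
    · exact .inl ⟨subset_closure hxs, hxW⟩

theorem exists_isCanonicalChain [NoetherianSpace X] {C : Set X} (hC : IsConstructible C) :
    ∃ (m : ℕ) (V' V'' : Fin m → Set X),
      IsCanonicalChain V' V'' ∧ C = ⋃ i, V' i \ V'' i ∧ ∀ i, V' i ⊆ closure C := by
  generalize hF : (⟨closure C, isClosed_closure⟩ : Closeds X) = F
  induction F using WellFoundedLT.induction generalizing C with
  | ind F IH =>
  subst hF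
  rcases C.eq_empty_or_nonempty with rfl | hne
  · exact ⟨0, finZeroElim, finZeroElim, .nil _ _, by simp, finZeroElim⟩
  set W := closure (closure C \ C) with hWdef
  have hWC : W ⊆ closure C := closure_minimal sdiff_subset isClosed_closure
  have hCW : IsConstructible (W ∩ C) :=
    (NoetherianSpace.isConstructible_of_isClosed isClosed_closure).inter hC
  have hclCW : closure (W ∩ C) ⊆ W := closure_minimal inter_subset_left isClosed_closure
  have hWlt : W ⊂ closure C := by
    obtain ⟨T, hT⟩ := isClosed_closure.exists_isIrredCompOf hne.closure
    exact hWC.ssubset_of_not_subset fun h =>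
      hT.not_subset_closure_closure_diff hC (hT.subset.trans h)
  obtain ⟨m, P', P'', hP, hCWeq, hP'⟩ :=
    IH ⟨closure (W ∩ C), isClosed_closure⟩ (hclCW.trans_ssubset hWlt) hCW rfl
  -- `W \ (closure C \ C) = W ∩ C`, so this is the key lemma for `closure C \ C`
  have hWCW : ∀ T, IsIrredCompOf T W → ¬ T ⊆ closure (W ∩ C) := by
    intro T hT
    have := hT.not_subset_closure_closure_diff
      ((NoetherianSpace.isConstructible_of_isClosed isClosed_closure).sdiff hC)
    rwa [← hWdef, sdiff_sdiff_right, sdiff_eq_empty.2 hWC, empty_union] at this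
  refine ⟨m + 1, Fin.cons (closure C) P', Fin.cons W P'',
    hP.cons isClosed_closure isClosed_closure hWC (fun i => (hP' i).trans hclCW)
      (fun T hT hTW => hT.not_subset_closure_closure_diff hC hTW.subset)
      (fun _ T hT hTP => hWCW T hT (hTP.subset.trans (hP' _))), ?_, ?_⟩
  · rw [Fin.iUnion_cons_diff_cons, ← hCWeq, closure_diff_union_inter_closure_closure_diff]
  · refine Fin.cases subset_rfl fun i => ?_
    exact (hP' i).trans (hclCW.trans hWC)

theorem canonical_presentation_exists
    {X : Type*} [TopologicalSpace X] [NoetherianSpace X]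
    (C : Set X) (hC : PaperConstructible C) :
    ∃ (m : ℕ) (V' V'' : Fin m → Set X),
      (∀ i, IsClosed (V' i)) ∧ (∀ i, IsClosed (V'' i)) ∧
      (∀ i, V'' i ⊆ V' i) ∧
      (∀ i : Fin m, ∀ h : i.1 + 1 < m, V' ⟨i.1 + 1, h⟩ ⊆ V'' i) ∧
      C = ⋃ i, V' i \ V'' i ∧
      (∀ i j : Fin m, i ≠ j → Disjoint (V' i \ V'' i) (V' j \ V'' j)) ∧
      (∀ i : Fin m, ∀ T : Set X, IsIrredCompOf T (V' i) → ¬ IsIrredCompOf T (V'' i)) ∧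
      (∀ i : Fin m, ∀ h : i.1 + 1 < m, ∀ T : Set X,
        IsIrredCompOf T (V'' i) → ¬ IsIrredCompOf T (V' ⟨i.1 + 1, h⟩)) := by
  obtain ⟨m, V', V'', hV, hCeq, -⟩ := exists_isCanonicalChain hC.isConstructible
  exact ⟨m, V', V'', hV.isClosed_upper, hV.isClosed_lower, hV.lower_subset_upper,
    hV.upper_succ_subset_lower, hCeq, hV.pairwise_disjoint, hV.not_isIrredCompOf_lower,
    hV.not_isIrredCompOf_upper_succ⟩
end

section
/- Let C be a constructible subset of a Noetherian topological space X. If C = ⋃_{i=1}^m (V_i' \ V_i'') with all V_i', V_i'' closed, the chain V_1' ⊇ V_1'' ⊇ ... ⊇ V_m' ⊇ V_m'' descending, the union disjoint, and no two consecutive members of the chain sharing an irreducible component, then V_1' is the closure of C and V_1'' is the closure of V_1' \ C; in particular such a presentation is unique. -/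
open Set TopologicalSpace

variable {X : Type*} [TopologicalSpace X]

/-- The canonical presentation of a constructible set: a disjoint union
`⋃ i, V' i \ V'' i` along a descending chain of closed sets
`V' 0 ⊇ V'' 0 ⊇ V' 1 ⊇ V'' 1 ⊇ ⋯` (eventually empty), no two consecutive members
of the chain sharing an irreducible component. -/
def IsCanonicalPresentation {X : Type*} [TopologicalSpace X]
    (C : Set X) (V' V'' : ℕ → Set X) : Prop :=
  (∀ i, IsClosed (V' i)) ∧ (∀ i, IsClosed (V'' i)) ∧
  (∀ i, V'' i ⊆ V' i) ∧ (∀ i, V' (i + 1) ⊆ V'' i) ∧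
  (∃ m, ∀ i, m ≤ i → V' i = ∅) ∧
  C = ⋃ i, V' i \ V'' i ∧
  (∀ i j, i ≠ j → Disjoint (V' i \ V'' i) (V' j \ V'' j)) ∧
  (∀ i, ∀ T : Set X, IsIrredCompOf T (V' i) → ¬ IsIrredCompOf T (V'' i)) ∧
  (∀ i, ∀ T : Set X, IsIrredCompOf T (V'' i) → ¬ IsIrredCompOf T (V' (i + 1)))

lemma exists_irredCompOf_superset {Y t : Set X} (hY : IsClosed Y)
    (ht : IsClosed t) (hti : IsIrreducible t) (hsub : t ⊆ Y) :
    ∃ T, IsIrredCompOf T Y ∧ t ⊆ T := by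
  have H : ∀ c ⊆ {T : Set X | IsClosed T ∧ IsIrreducible T ∧ T ⊆ Y},
      IsChain (· ⊆ ·) c → c.Nonempty →
      ∃ ub ∈ {T : Set X | IsClosed T ∧ IsIrreducible T ∧ T ⊆ Y}, ∀ s ∈ c, s ⊆ ub := by
    rintro c hc hchain ⟨s, hs⟩
    have hpre : IsPreirreducible (⋃₀ c) := by
      rintro u v hu hv ⟨x, hxU, hxu⟩ ⟨y, hyU, hyv⟩
      obtain ⟨a, hac, hxa⟩ := hxU
      obtain ⟨b, hbc, hyb⟩ := hyU
      rcases hchain.total hac hbc with hab | hba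
      · obtain ⟨z, hz, hzuv⟩ := (hc hbc).2.1.2 u v hu hv ⟨x, hab hxa, hxu⟩ ⟨y, hyb, hyv⟩
        exact ⟨z, ⟨b, hbc, hz⟩, hzuv⟩
      · obtain ⟨z, hz, hzuv⟩ := (hc hac).2.1.2 u v hu hv ⟨x, hxa, hxu⟩ ⟨y, hba hyb, hyv⟩
        exact ⟨z, ⟨a, hac, hz⟩, hzuv⟩
    refine ⟨closure (⋃₀ c), ⟨isClosed_closure,
      ⟨?_, hpre.closure⟩, closure_minimal (sUnion_subset fun a ha => (hc ha).2.2) hY⟩,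
      fun a ha => (subset_sUnion_of_mem ha).trans subset_closure⟩
    exact ((hc hs).2.1.nonempty.mono (subset_sUnion_of_mem hs)).mono subset_closure
  obtain ⟨T, htT, hT⟩ := zorn_subset_nonempty
    {T : Set X | IsClosed T ∧ IsIrreducible T ∧ T ⊆ Y} H t ⟨ht, hti, hsub⟩
  refine ⟨T, ⟨hT.prop.1, hT.prop.2.1, hT.prop.2.2, ?_⟩, htT⟩
  intro T' h1 h2 h3 h4
  exact subset_antisymm (hT.2 ⟨h1, h2, h3⟩ h4) h4

lemma IsIrredCompOf.of_subset_s1 {T Y Z : Set X} (h : IsIrredCompOf T Y)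
    (hZY : Z ⊆ Y) (hTZ : T ⊆ Z) : IsIrredCompOf T Z :=
  ⟨h.1, h.2.1, hTZ, fun T' c i s hs => h.2.2.2 T' c i (s.trans hZY) hs⟩

lemma subset_closure_diff {Y Z : Set X} (hY : IsClosed Y) (hZ : IsClosed Z)
    (hZY : Z ⊆ Y)
    (h : ∀ T, IsIrredCompOf T Y → ¬ IsIrredCompOf T Z) :
    Y ⊆ closure (Y \ Z) := by
  intro x hx
  obtain ⟨T, hT, hxT⟩ := exists_irredCompOf_superset hY isClosed_closure
    isIrreducible_singleton.closure (closure_minimal (singleton_subset_iff.2 hx) hY)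
  have hxT' : x ∈ T := hxT (subset_closure rfl)
  have hnsub : ¬ T ⊆ Z := fun hs => h T hT (hT.of_subset_s1 hZY hs)
  obtain ⟨y, hyT, hyZ⟩ := not_subset.1 hnsub
  rw [mem_closure_iff]
  intro u hu hxu
  obtain ⟨z, hzT, hzu, hzZ⟩ := hT.2.1.2 u Zᶜ hu hZ.isOpen_compl ⟨x, hxT', hxu⟩ ⟨y, hyT, hyZ⟩
  exact ⟨z, hzu, hT.2.2.1 hzT, hzZ⟩

namespace CanonAux

variable {C : Set X} {V' V'' : ℕ → Set X}

lemma antitoneV' (h : IsCanonicalPresentation C V' V'') : Antitone V' :=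
  antitone_nat_of_succ_le fun i => (h.2.2.2.1 i).trans (h.2.2.1 i)

lemma subC (h : IsCanonicalPresentation C V' V'') (i : ℕ) : V' i \ V'' i ⊆ C := by
  rw [h.2.2.2.2.2.1]; exact subset_iUnion (fun i => V' i \ V'' i) i

lemma C_sub_top (h : IsCanonicalPresentation C V' V'') : C ⊆ V' 0 := by
  rw [h.2.2.2.2.2.1]
  exact iUnion_subset fun i => (diff_subset).trans (antitoneV' h (Nat.zero_le i))

lemma top_eq_closure (h : IsCanonicalPresentation C V' V'') : V' 0 = closure C := by
  apply subset_antisymm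
  · exact (subset_closure_diff (h.1 0) (h.2.1 0) (h.2.2.1 0) (h.2.2.2.2.2.2.2.1 0)).trans
      (closure_mono (subC h 0))
  · exact closure_minimal (C_sub_top h) (h.1 0)

lemma snd_eq_closure (h : IsCanonicalPresentation C V' V'') :
    V'' 0 = closure (V' 0 \ C) := by
  apply subset_antisymm
  · refine (subset_closure_diff (h.2.1 0) (h.1 1) (h.2.2.2.1 0)
      (h.2.2.2.2.2.2.2.2 0)).trans (closure_mono ?_)
    rintro x ⟨hx0, hx1⟩
    refine ⟨h.2.2.1 0 hx0, fun hxC => ?_⟩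
    rw [h.2.2.2.2.2.1] at hxC
    obtain ⟨i, hi⟩ := mem_iUnion.1 hxC
    match i with
    | 0 => exact hi.2 hx0
    | (j+1) => exact hx1 (antitoneV' h (Nat.one_le_iff_ne_zero.2 (Nat.succ_ne_zero j)) hi.1)
  · refine closure_minimal ?_ (h.2.1 0)
    rintro x ⟨hx0, hxC⟩
    by_contra hx
    exact hxC (subC h 0 ⟨hx0, hx⟩)

lemma shift (h : IsCanonicalPresentation C V' V'') :
    IsCanonicalPresentation (C ∩ V'' 0) (fun i => V' (i+1)) (fun i => V'' (i+1)) := by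
  obtain ⟨m, hm⟩ := h.2.2.2.2.1
  refine ⟨fun i => h.1 _, fun i => h.2.1 _, fun i => h.2.2.1 _, fun i => h.2.2.2.1 _,
    ⟨m, fun i hi => hm _ (hi.trans (Nat.le_succ i))⟩, ?_,
    fun i j hij => h.2.2.2.2.2.2.1 _ _ (fun e => hij (Nat.succ_injective e)),
    fun i => h.2.2.2.2.2.2.2.1 _, fun i => h.2.2.2.2.2.2.2.2 _⟩
  ext x
  simp only [mem_inter_iff, mem_iUnion]
  constructor
  · rintro ⟨hxC, hx0⟩
    rw [h.2.2.2.2.2.1] at hxC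
    obtain ⟨i, hi⟩ := mem_iUnion.1 hxC
    match i with
    | 0 => exact absurd hx0 hi.2
    | (j+1) => exact ⟨j, hi⟩
  · rintro ⟨i, hi⟩
    exact ⟨subC h (i+1) hi, h.2.2.2.1 0 (antitoneV' h (Nat.one_le_iff_ne_zero.2 (Nat.succ_ne_zero i)) hi.1)⟩

lemma eq_zero {C : Set X} {V' V'' W' W'' : ℕ → Set X}
    (h1 : IsCanonicalPresentation C V' V'') (h2 : IsCanonicalPresentation C W' W'') :
    V' 0 = W' 0 ∧ V'' 0 = W'' 0 := by
  have e1 : V' 0 = W' 0 := (top_eq_closure h1).trans (top_eq_closure h2).symm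
  refine ⟨e1, ?_⟩
  rw [snd_eq_closure h1, snd_eq_closure h2, e1]

lemma eq_all : ∀ (i : ℕ) (C : Set X) (V' V'' W' W'' : ℕ → Set X),
    IsCanonicalPresentation C V' V'' → IsCanonicalPresentation C W' W'' →
    V' i = W' i ∧ V'' i = W'' i := by
  intro i
  induction i with
  | zero =>
    intro C V' V'' W' W'' h1 h2
    exact eq_zero h1 h2
  | succ i ih =>
    intro C V' V'' W' W'' h1 h2
    have e0 : V'' 0 = W'' 0 := (eq_zero h1 h2).2
    exact ih (C ∩ V'' 0) _ _ _ _ (shift h1) (e0 ▸ shift h2)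

end CanonAux

theorem canonical_presentation_unique
    {X : Type*} [TopologicalSpace X] [NoetherianSpace X]
    (C : Set X) (hC : PaperConstructible C)
    (V' V'' W' W'' : ℕ → Set X)
    (h1 : IsCanonicalPresentation C V' V'')
    (h2 : IsCanonicalPresentation C W' W'') :
    V' 0 = closure C ∧ V'' 0 = closure (V' 0 \ C) ∧ V' = W' ∧ V'' = W'' :=
  ⟨CanonAux.top_eq_closure h1, CanonAux.snd_eq_closure h1,
    funext fun i => (CanonAux.eq_all i C V' V'' W' W'' h1 h2).1,
    funext fun i => (CanonAux.eq_all i C V' V'' W' W'' h1 h2).2⟩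
end

section
/- Let C be a nonempty constructible subset of a Noetherian topological space, with canonical presentation determined by the descending chain V_1' ⊇ V_1'' ⊇ ⋯. Then the closure of C equals V_1', and the dimension of any irreducible component of V_1'' is strictly less than the maximal dimension of an irreducible component of V_1' (assuming V_1'' is nonempty and the space is finite-dimensional). -/
open Set TopologicalSpace

variable {X : Type*} [TopologicalSpace X]

/-! The closure of `C` is `V' 0`: no irreducible component of `V' 0` is a component of `V'' 0`,
so each one meets the open subset `V' 0 \ V'' 0` of `C` and lies in the closure of that
intersection. An irreducible component `T` of `V'' 0` is, for the same reason, not a component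
of `V' 0`, hence strictly contained in one, `T'`; appending `T'` to a longest chain of irreducible
closed subsets of `T` shows `dim T < dim T'`, as `dim T ≤ dim X` is finite. -/

open Topology

theorem Order.krullDim_lt_of_strictMono {α β : Type*} [Preorder α] [Preorder β] {f : α → β}
    (hf : StrictMono f) {b : β} (hb : ∀ a, f a < b) (hα : krullDim α < ⊤) :
    krullDim α < krullDim β := by
  have : Nonempty β := ⟨b⟩
  cases isEmpty_or_nonempty α
  · rw [krullDim_eq_bot]
    exact bot_lt_krullDim
  have hg : StrictMono (WithTop.recTopCoe b f : WithTop α → β) :=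
    WithTop.strictMono_iff.2 ⟨hf, hb⟩
  obtain ⟨n, hn⟩ : ∃ n : ℕ, krullDim α = n := by
    obtain ⟨m, hm⟩ := WithBot.ne_bot_iff_exists.1 (krullDim_ne_bot_iff.2 ‹_›)
    lift m to ℕ using by rintro rfl; exact hα.ne hm.symm
    exact ⟨m, hm.symm⟩
  calc krullDim α < krullDim α + 1 := by rw [hn]; exact_mod_cast Nat.lt_succ_self n
    _ = krullDim (WithTop α) := krullDim_WithTop.symm
    _ ≤ krullDim β := krullDim_le_of_strictMono _ hg

theorem Topology.IsClosedEmbedding.topologicalKrullDim_lt {Y : Type*} [TopologicalSpace Y]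
    [IrreducibleSpace X] {f : Y → X} (hf : IsClosedEmbedding f)
    (hsurj : ¬ Function.Surjective f) (hY : topologicalKrullDim Y < ⊤) :
    topologicalKrullDim Y < topologicalKrullDim X := by
  let univ' : IrreducibleCloseds X := ⟨univ, IrreducibleSpace.isIrreducible_univ X, isClosed_univ⟩
  refine Order.krullDim_lt_of_strictMono
    (IrreducibleCloseds.map_strictMono_of_isInducing hf.isInducing) (b := univ') (fun Z => ?_) hY
  have hsub : (IrreducibleCloseds.map f hf.continuous Z : Set X) ⊆ range f :=
    closure_minimal (image_subset_range f Z) hf.isClosed_range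
  refine lt_of_le_of_ne (subset_univ _) fun h => hsurj ?_
  rw [← range_eq_univ, ← univ_subset_iff]
  exact (congrArg SetLike.coe h).symm.subset.trans hsub

theorem topologicalKrullDim_lt_of_ssubset {S T : Set X} (hS : IsClosed S) (hT : IsIrreducible T)
    (hST : S ⊂ T) (hS_fin : topologicalKrullDim S < ⊤) :
    topologicalKrullDim S < topologicalKrullDim T := by
  have := isIrreducible_iff_irreducibleSpace.1 hT
  obtain ⟨x, hxT, hxS⟩ := exists_of_ssubset hST
  refine (IsClosedEmbedding.inclusion hST.subset
    (hS.preimage continuous_subtype_val)).topologicalKrullDim_lt (fun h => ?_) hS_fin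
  obtain ⟨⟨y, hyS⟩, hy⟩ := h ⟨x, hxT⟩
  obtain rfl : y = x := congrArg Subtype.val hy
  exact hxS hyS

theorem IsChain.isPreirreducible_sUnion {c : Set (Set X)} (hchain : IsChain (· ⊆ ·) c)
    (hc : ∀ s ∈ c, IsPreirreducible s) : IsPreirreducible (⋃₀ c) := by
  rintro u v hu hv ⟨y, ⟨p, hpc, hyp⟩, hyu⟩ ⟨z, ⟨q, hqc, hzq⟩, hzv⟩
  rcases hchain.total hpc hqc with hpq | hqp
  · obtain ⟨x, hxq, hxuv⟩ := hc q hqc u v hu hv ⟨y, hpq hyp, hyu⟩ ⟨z, hzq, hzv⟩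
    exact ⟨x, mem_sUnion_of_mem hxq hqc, hxuv⟩
  · obtain ⟨x, hxp, hxuv⟩ := hc p hpc u v hu hv ⟨y, hyp, hyu⟩ ⟨z, hqp hzq, hzv⟩
    exact ⟨x, mem_sUnion_of_mem hxp hpc, hxuv⟩

theorem exists_isIrredCompOf_superset {S V : Set X} (hV : IsClosed V) (hS : IsIrreducible S)
    (hSV : S ⊆ V) : ∃ T, IsIrredCompOf T V ∧ S ⊆ T := by
  obtain ⟨T, hST, hmax⟩ := zorn_subset_nonempty {t : Set X | IsPreirreducible t ∧ t ⊆ V}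
    (fun c hc hchain _ => ⟨⋃₀ c, ⟨hchain.isPreirreducible_sUnion fun s hs => (hc hs).1,
      sUnion_subset fun s hs => (hc hs).2⟩, fun _ => subset_sUnion_of_mem⟩) S ⟨hS.2, hSV⟩
  have hT : IsClosed T := by
    rw [← closure_subset_iff_isClosed]
    exact (hmax.eq_of_subset ⟨hmax.1.1.closure, closure_minimal hmax.1.2 hV⟩
      subset_closure).symm.subset
  refine ⟨T, ⟨hT, ⟨hS.nonempty.mono hST, hmax.1.1⟩, hmax.1.2, ?_⟩, hST⟩
  exact fun T' _ hT' hT'V hTT' => (hmax.eq_of_subset ⟨hT'.2, hT'V⟩ hTT').symm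

theorem IsIrredCompOf.of_subset_s2 {T V W : Set X} (hT : IsIrredCompOf T V) (hTW : T ⊆ W)
    (hWV : W ⊆ V) : IsIrredCompOf T W :=
  ⟨hT.1, hT.2.1, hTW, fun T' hc hi hT'W => hT.2.2.2 T' hc hi (hT'W.trans hWV)⟩

theorem subset_closure_diff_of_isIrredCompOf {V W : Set X} (hV : IsClosed V) (hW : IsClosed W)
    (hWV : W ⊆ V) (hVW : ∀ T, IsIrredCompOf T V → ¬ IsIrredCompOf T W) :
    V ⊆ closure (V \ W) := by
  intro x hx
  obtain ⟨T, hT, hxT⟩ := exists_isIrredCompOf_superset hV isIrreducible_singleton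
    (singleton_subset_iff.2 hx)
  have hTW : (T ∩ Wᶜ).Nonempty :=
    inter_compl_nonempty_iff.2 fun hTW => hVW T hT (hT.of_subset_s2 hTW hWV)
  have hTdense := subset_closure_inter_of_isPreirreducible_of_isOpen hT.2.1.2 hW.isOpen_compl hTW
  exact closure_mono (inter_subset_inter_left _ hT.2.2.1) (hTdense (hxT rfl))

theorem exists_isIrredCompOf_topologicalKrullDim_lt {T V : Set X} (hV : IsClosed V)
    (hTc : IsClosed T) (hTi : IsIrreducible T) (hTV : T ⊆ V) (hT : ¬ IsIrredCompOf T V)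
    (hT_fin : topologicalKrullDim T < ⊤) :
    ∃ T', IsIrredCompOf T' V ∧ topologicalKrullDim T < topologicalKrullDim T' := by
  obtain ⟨T', hT', hTT'⟩ := exists_isIrredCompOf_superset hV hTi hTV
  have hne : T ≠ T' := by rintro rfl; exact hT hT'
  exact ⟨T', hT', topologicalKrullDim_lt_of_ssubset hTc hT'.2.1 (hTT'.ssubset_of_ne hne) hT_fin⟩

theorem canonical_presentation_dim_drop_general
    {X : Type*} [TopologicalSpace X]
    (hdim : topologicalKrullDim X < ⊤)
    (C : Set X)
    (V' V'' : ℕ → Set X)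
    (h : IsCanonicalPresentation C V' V'') :
    closure C = V' 0 ∧
    ∀ T : Set X, IsIrredCompOf T (V'' 0) →
      topologicalKrullDim ↥T <
        sSup {d : WithBot ℕ∞ | ∃ T' : Set X, IsIrredCompOf T' (V' 0) ∧
          d = topologicalKrullDim ↥T'} := by
  obtain ⟨hV', hV'', hV''V', hV'V'', -, rfl, -, hcomp, -⟩ := h
  have hV'_anti : Antitone V' :=
    antitone_nat_of_succ_le fun i => (hV'V'' i).trans (hV''V' i)
  have hCV' : ⋃ i, V' i \ V'' i ⊆ V' 0 :=
    iUnion_subset fun i => sdiff_subset.trans (hV'_anti (Nat.zero_le i))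
  refine ⟨(closure_minimal hCV' (hV' 0)).antisymm ?_, fun T hT => ?_⟩
  · calc V' 0 ⊆ closure (V' 0 \ V'' 0) :=
          subset_closure_diff_of_isIrredCompOf (hV' 0) (hV'' 0) (hV''V' 0) (hcomp 0)
      _ ⊆ closure (⋃ i, V' i \ V'' i) := closure_mono (subset_iUnion (fun i => V' i \ V'' i) 0)
  · have hT_fin := (topologicalKrullDim_subspace_le X T).trans_lt hdim
    obtain ⟨T', hT', hlt⟩ := exists_isIrredCompOf_topologicalKrullDim_lt (hV' 0) hT.1 hT.2.1
      (hT.2.2.1.trans (hV''V' 0)) (fun hT' => hcomp 0 T hT' hT) hT_fin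
    exact hlt.trans_le (le_sSup ⟨T', hT', rfl⟩)

theorem canonical_presentation_dim_drop
    {X : Type*} [TopologicalSpace X] [NoetherianSpace X]
    (hdim : topologicalKrullDim X < ⊤)
    (C : Set X) (hC : PaperConstructible C) (hCne : C.Nonempty)
    (V' V'' : ℕ → Set X)
    (h : IsCanonicalPresentation C V' V'')
    (hne : (V'' 0).Nonempty) :
    closure C = V' 0 ∧
    ∀ T : Set X, IsIrredCompOf T (V'' 0) →
      topologicalKrullDim ↥T <
        sSup {d : WithBot ℕ∞ | ∃ T' : Set X, IsIrredCompOf T' (V' 0) ∧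
          d = topologicalKrullDim ↥T'} :=
  canonical_presentation_dim_drop_general hdim C V' V'' h
end

section
/- Let X be a Noetherian topological space, Y a finite set, and f : X → Y a function. Then f^{-1}(y) is constructible for every y ∈ Y if and only if for every closed irreducible subset X' ⊆ X there exists a nonempty open subset U of X' such that f restricted to U is constant. -/
open Set TopologicalSpace

variable {X : Type*} [TopologicalSpace X]

/-!
If the fibres are constructible, their finitely many locally closed pieces `A \ B` cover an
irreducible `X'`, so the trace on `X'` of one of them is dense in `X'`. Then `X' ⊆ A`, and
`X' \ B` is a nonempty open subset of `X'` on which `f` is constant.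

Conversely, Noetherian induction shows that `f ⁻¹' {y} ∩ Z` is constructible for every closed `Z`.
A reducible `Z` is the union of two smaller closed sets. For an irreducible `Z` with `f` constant
on a nonempty `Z ∩ U`, the set `f ⁻¹' {y} ∩ Z ∩ U` is either empty or `Z \ Uᶜ`, and `Z \ U` is a
smaller closed set.
-/

lemma IsIrreducible.exists_subset_of_subset_iUnion_isClosed {ι : Type*} [Finite ι]
    {s : Set X} (hs : IsIrreducible s) {Z : ι → Set X} (hZ : ∀ i, IsClosed (Z i))
    (hsZ : s ⊆ ⋃ i, Z i) : ∃ i, s ⊆ Z i := by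
  classical
  have := Fintype.ofFinite ι
  obtain ⟨_, hz, hsz⟩ := isIrreducible_iff_sUnion_isClosed.mp hs (Finset.univ.image Z)
    (by simpa using hZ) (by simpa using hsZ)
  obtain ⟨i, -, rfl⟩ := Finset.mem_image.mp hz
  exact ⟨i, hsz⟩

lemma IsIrreducible.exists_subset_closure_inter {ι : Type*} [Finite ι]
    {s : Set X} (hs : IsIrreducible s) {t : ι → Set X} (hst : s ⊆ closure (s ∩ ⋃ i, t i)) :
    ∃ i, s ⊆ closure (s ∩ t i) := by
  refine hs.exists_subset_of_subset_iUnion_isClosed (fun _ ↦ isClosed_closure) ?_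
  rwa [inter_iUnion, closure_iUnion_of_finite] at hst

lemma IsIrreducible.exists_isOpen_inter_subset_of_paperLocallyClosed {s V : Set X}
    (hs : IsIrreducible s) (hV : PaperLocallyClosed V) (hsV : s ⊆ closure (s ∩ V)) :
    ∃ U, IsOpen U ∧ (s ∩ U).Nonempty ∧ s ∩ U ⊆ V := by
  obtain ⟨A, B, hA, hB, rfl⟩ := hV
  have hsA : s ⊆ A := hsV.trans <| closure_minimal (inter_subset_right.trans sdiff_subset) hA
  obtain ⟨x, hxs, hxA, hxB⟩ : (s ∩ (A \ B)).Nonempty := by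
    by_contra h
    rw [not_nonempty_iff_eq_empty.mp h, closure_empty, subset_empty_iff] at hsV
    exact hs.nonempty.ne_empty hsV
  exact ⟨Bᶜ, hB.isOpen_compl, ⟨x, hxs, hxB⟩, fun y hy ↦ ⟨hsA hy.1, hy.2⟩⟩

lemma IsIrreducible.exists_isOpen_inter_subset_of_paperConstructible {s C : Set X}
    (hs : IsIrreducible s) (hC : PaperConstructible C) (hsC : s ⊆ closure (s ∩ C)) :
    ∃ U, IsOpen U ∧ (s ∩ U).Nonempty ∧ s ∩ U ⊆ C := by
  obtain ⟨m, V, hV, rfl⟩ := hC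
  obtain ⟨i, hi⟩ := hs.exists_subset_closure_inter hsC
  obtain ⟨U, hU, hsU, hsUV⟩ := hs.exists_isOpen_inter_subset_of_paperLocallyClosed (hV i) hi
  exact ⟨U, hU, hsU, hsUV.trans (subset_iUnion V i)⟩

lemma PaperConstructible.empty : PaperConstructible (∅ : Set X) :=
  ⟨0, Fin.elim0, fun i ↦ i.elim0, by simp⟩

lemma PaperLocallyClosed.paperConstructible {s : Set X} (h : PaperLocallyClosed s) :
    PaperConstructible s :=
  ⟨1, fun _ ↦ s, fun _ ↦ h, (iUnion_const s).symm⟩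

lemma PaperConstructible.union {s t : Set X} (hs : PaperConstructible s)
    (ht : PaperConstructible t) : PaperConstructible (s ∪ t) := by
  obtain ⟨m, V, hV, rfl⟩ := hs
  obtain ⟨n, W, hW, rfl⟩ := ht
  refine ⟨m + n, Fin.append V W, Fin.addCases (by simpa using hV) (by simpa using hW), ?_⟩
  ext x
  simp only [mem_union, mem_iUnion]
  rw [← not_iff_not]
  simp [Fin.forall_fin_add]

lemma PaperConstructible.inter_of_inter_diff {s Z U : Set X} (hZ : IsClosed Z) (hU : IsOpen U)
    (hs : Z ∩ U ⊆ s ∨ Disjoint s (Z ∩ U)) (h : PaperConstructible (s ∩ (Z \ U))) :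
    PaperConstructible (s ∩ Z) := by
  have hZU : PaperConstructible (s ∩ (Z ∩ U)) := by
    rcases hs with hs | hs
    · rw [inter_eq_right.mpr hs]
      exact PaperLocallyClosed.paperConstructible ⟨Z, Uᶜ, hZ, hU.isClosed_compl, by rw [sdiff_compl]⟩
    · rw [hs.inter_eq]
      exact .empty
  rw [← inter_union_sdiff Z U, inter_union_distrib_left]
  exact hZU.union h

theorem TopologicalSpace.NoetherianSpace.isClosed_induction [NoetherianSpace X]
    {P : Set X → Prop} (empty : P ∅) (union : ∀ s t, P s → P t → P (s ∪ t))
    (irreducible : ∀ Z, IsClosed Z → IsIrreducible Z → (∀ Z', IsClosed Z' → Z' ⊂ Z → P Z') → P Z)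
    {Z : Set X} (hZ : IsClosed Z) : P Z := by
  lift Z to Closeds X using hZ
  induction Z using WellFoundedLT.induction with
  | _ Z IH =>
  replace IH : ∀ Z' : Set X, IsClosed Z' → Z' ⊂ Z → P Z' := fun Z' hZ' h ↦ IH ⟨Z', hZ'⟩ h
  rcases (Z : Set X).eq_empty_or_nonempty with hZ | hZ
  · rw [hZ]
    exact empty
  by_cases hirr : IsPreirreducible (Z : Set X)
  · exact irreducible Z Z.isClosed ⟨hZ, hirr⟩ IH
  simp only [isPreirreducible_iff_isClosed_union_isClosed, not_forall, not_or] at hirr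
  obtain ⟨z₁, z₂, hz₁, hz₂, hZz, hZz₁, hZz₂⟩ := hirr
  rw [← inter_eq_left.mpr hZz, inter_union_distrib_left]
  exact union _ _ (IH _ (Z.isClosed.inter hz₁) (inter_ssubset_left_iff.mpr hZz₁))
    (IH _ (Z.isClosed.inter hz₂) (inter_ssubset_left_iff.mpr hZz₂))

theorem constructible_fibers_iff_generically_constant
    {X : Type*} [TopologicalSpace X] [NoetherianSpace X]
    {Y : Type*} [Finite Y] (f : X → Y) :
    (∀ y : Y, PaperConstructible (f ⁻¹' {y})) ↔
      (∀ X' : Set X, IsClosed X' → IsIrreducible X' →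
        ∃ U : Set X, IsOpen U ∧ (X' ∩ U).Nonempty ∧
          ∀ a ∈ X' ∩ U, ∀ b ∈ X' ∩ U, f a = f b) := by
  constructor
  · intro h X' _ hX'
    obtain ⟨y, hy⟩ := hX'.exists_subset_closure_inter (t := fun y ↦ f ⁻¹' {y})
      (by simpa only [← preimage_iUnion, iUnion_of_singleton, preimage_univ, inter_univ]
        using subset_closure)
    obtain ⟨U, hU, hX'U, hsub⟩ := hX'.exists_isOpen_inter_subset_of_paperConstructible (h y) hy
    exact ⟨U, hU, hX'U, fun a ha b hb ↦ (hsub ha).trans (hsub hb).symm⟩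
  · intro h y
    have key := NoetherianSpace.isClosed_induction
      (P := fun Z ↦ PaperConstructible (f ⁻¹' {y} ∩ Z)) (by simpa using .empty)
      (fun s t hs ht ↦ by simpa only [inter_union_distrib_left] using hs.union ht) ?_ isClosed_univ
    · simpa using key
    intro Z hZ hZirr IH
    obtain ⟨U, hU, ⟨x, hx⟩, hconst⟩ := h Z hZ hZirr
    refine PaperConstructible.inter_of_inter_diff hZ hU ?_
      (IH _ (hZ.sdiff hU) (sdiff_ssubset_left_iff.mpr ⟨x, hx⟩))
    by_cases hy : f x = y
    · exact .inl fun a ha ↦ (hconst a ha x hx).trans hy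
    · exact .inr <| disjoint_left.mpr fun a ha ha' ↦ hy ((hconst x hx a ha').trans ha)
end

section
/- Let X be a Noetherian topological space, Y a finite set, and f : X → Y such that every fiber f^{-1}(y) is constructible. Then for every closed irreducible X' ⊆ X there is a unique y ∈ Y such that f^{-1}(y) ∩ X' is dense in X', and f^{-1}(y) ∩ X' contains a nonempty open subset of X'. -/
open Set TopologicalSpace

variable {X : Type*} [TopologicalSpace X]

/-- An irreducible set covered by finitely many closed sets is contained in one of them. -/
lemma irred_subset_of_cover {X : Type*} [TopologicalSpace X] {s : Set X}
    (hs : IsIrreducible s) {ι : Type*} [Fintype ι] (Z : ι → Set X)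
    (hZ : ∀ i, IsClosed (Z i)) (hsub : s ⊆ ⋃ i, Z i) : ∃ i, s ⊆ Z i := by
  classical
  obtain ⟨z, hz, hsz⟩ := isIrreducible_iff_sUnion_isClosed.mp hs
    (Finset.univ.image Z) (by simp [hZ]) (by simpa [sUnion_image] using hsub)
  simp only [Finset.mem_image, Finset.mem_univ, true_and] at hz
  obtain ⟨i, rfl⟩ := hz
  exact ⟨i, hsz⟩

theorem unique_dense_fiber_on_irreducible
    {X : Type*} [TopologicalSpace X] [NoetherianSpace X]
    {Y : Type*} [Finite Y] (f : X → Y)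
    (hf : ∀ y : Y, PaperConstructible (f ⁻¹' {y})) :
    ∀ X' : Set X, IsClosed X' → IsIrreducible X' →
      (∃! y : Y, X' ⊆ closure (f ⁻¹' {y} ∩ X')) ∧
      ∀ y : Y, X' ⊆ closure (f ⁻¹' {y} ∩ X') →
        ∃ U : Set X, IsOpen U ∧ (X' ∩ U).Nonempty ∧ X' ∩ U ⊆ f ⁻¹' {y} := by
  intro X' hX'cl hX'irr
  have := Fintype.ofFinite Y
  -- the "open subset" part, proved first
  have main : ∀ y : Y, X' ⊆ closure (f ⁻¹' {y} ∩ X') →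
      ∃ U : Set X, IsOpen U ∧ (X' ∩ U).Nonempty ∧ X' ∩ U ⊆ f ⁻¹' {y} := by
    intro y hy
    obtain ⟨m, V, hVlc, hVeq⟩ := hf y
    -- X' ⊆ ⋃ i, closure (V i ∩ X')
    have hcov : X' ⊆ ⋃ i, closure (V i ∩ X') := by
      intro x hx
      have hx' : x ∈ closure (⋃ i, V i ∩ X') := by
        rw [← iUnion_inter, ← hVeq]; exact hy hx
      rwa [closure_iUnion_of_finite] at hx'
    obtain ⟨i, hi⟩ := irred_subset_of_cover hX'irr _ (fun i => isClosed_closure) hcov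
    obtain ⟨C, D, hC, hD, hCD⟩ := hVlc i
    have hXC : X' ⊆ C := by
      refine hi.trans ?_
      refine closure_minimal ?_ hC
      rw [hCD]; exact fun x hx => hx.1.1
    refine ⟨Dᶜ, hD.isOpen_compl, ?_, ?_⟩
    · by_contra h
      rw [not_nonempty_iff_eq_empty] at h
      have hXD : X' ⊆ D := by
        intro x hx
        by_contra hxD
        exact absurd (show x ∈ X' ∩ Dᶜ from ⟨hx, hxD⟩) (by simp [h])
      have hVempty : V i ∩ X' = ∅ := by
        rw [hCD]; ext x; simp only [mem_inter_iff, mem_diff, mem_empty_iff_false, iff_false]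
        rintro ⟨⟨_, hxD⟩, hxX⟩; exact hxD (hXD hxX)
      obtain ⟨x, hx⟩ := hX'irr.nonempty
      have hx2 := hi hx
      rw [hVempty, closure_empty] at hx2
      exact hx2
    · intro x ⟨hxX, hxD⟩
      have : x ∈ V i := by rw [hCD]; exact ⟨hXC hxX, hxD⟩
      have : x ∈ ⋃ j, V j := mem_iUnion.mpr ⟨i, this⟩
      rwa [← hVeq] at this
  refine ⟨?_, main⟩
  -- existence
  have hex : ∃ y : Y, X' ⊆ closure (f ⁻¹' {y} ∩ X') := by
    have hcov : X' ⊆ ⋃ y : Y, closure (f ⁻¹' {y} ∩ X') := by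
      intro x hx
      exact mem_iUnion.mpr ⟨f x, subset_closure ⟨rfl, hx⟩⟩
    exact irred_subset_of_cover hX'irr _ (fun _ => isClosed_closure) hcov
  obtain ⟨y, hy⟩ := hex
  refine ⟨y, hy, ?_⟩
  intro y' hy'
  by_contra hne
  obtain ⟨U, hU, ⟨x, hxX, hxU⟩, hUsub⟩ := main y' hy'
  have hxcl : x ∈ closure (f ⁻¹' {y} ∩ X') := hy hxX
  obtain ⟨z, hzU, hzf, hzX⟩ := mem_closure_iff.mp hxcl U hU hxU
  have : z ∈ f ⁻¹' {y'} := hUsub ⟨hzX, hzU⟩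
  exact hne (by rw [← hzf, this])
end

section
/- Let C be a commutative ring, P a prime ideal of C with residue field k(P), and σ_P : C[y_1,...,y_l] → k(P)[y_1,...,y_l] the induced specialization map. Let < be a monomial order on C[y] (viewing coefficients in C) and let G be a finite subset of C[y] generating an ideal I, such that G is a Gröbner basis of I over C and the product h of the leading C-coefficients of the elements of G (with respect to the order on y-monomials) is not in P. Then σ_P(G) is a Gröbner basis of σ_P(I)·k(P)[y]: the leading monomial of every nonzero element of the ideal generated by σ_P(G) is divisible by the leading monomial of some σ_P(g), g ∈ G. -/
open MvPolynomial

noncomputable section Groebner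

variable {σ : Type*} {C : Type*} [CommRing C]

/-- The leading monomial `inM_*(f)` of `f ∈ C[y]` with respect to the monomial
order `m` (the maximum of the support of `f`; it is `0` when `f = 0`). -/
def lmon (m : MonomialOrder σ) (f : MvPolynomial σ C) : σ →₀ ℕ :=
  m.toSyn.symm (f.support.sup fun d => m.toSyn d)

/-- The leading coefficient `inC_*(f) ∈ C` of `f ∈ C[y]` with respect to `m`. -/
def lcoeff (m : MonomialOrder σ) (f : MvPolynomial σ C) : C :=
  f.coeff (lmon m f)

/-- The residue field `k(P) = Frac(C/P)` at a prime `P ⊆ C`. -/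
abbrev resField (P : Ideal C) [P.IsPrime] := FractionRing (C ⧸ P)

/-- The specialization map `σ_P : C[y] → k(P)[y]`, applying the canonical map
`C → k(P)` to the coefficients. -/
def specialize (P : Ideal C) [P.IsPrime] :
    MvPolynomial σ C →+* MvPolynomial σ (resField P) :=
  MvPolynomial.map ((algebraMap (C ⧸ P) (resField P)).comp (Ideal.Quotient.mk P))

end Groebner

/-!
Clearing denominators, a nonzero `p` in the ideal generated by `σ_P(G)` satisfies
`σ_P(c) * p = σ_P(f)` for some `f ∈ I` and `c ∉ P`, and `σ_P(c) * p` has the leading monomial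
of `p`. Take such an `f` of minimal leading monomial and `g ∈ G` whose leading term divides that
of `f`, say `inC(f) = inC(g) * e`. If `e ∈ P`, then `f - e * y ^ (inM(f) - inM(g)) * g ∈ I` has the
same specialization and a smaller leading monomial. Otherwise `inC(f) ∉ P`, so specialization
keeps the leading monomials of `f` and of `g`, and `inM(g) ≤ inM(f)`.
-/

namespace MonomialOrder

open scoped MonomialOrder

variable {σ R : Type*} {m : MonomialOrder σ} [CommRing R]

variable (m) in
def IsGroebnerBasis (G : Set (MvPolynomial σ R)) : Prop :=
  ∀ f ∈ Ideal.span G, f ≠ 0 → ∃ g ∈ G, m.leadingTerm g ∣ m.leadingTerm f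

theorem degree_map_of_map_leadingCoeff_ne_zero {S : Type*} [CommRing S] (φ : R →+* S)
    {f : MvPolynomial σ R} (h : φ (m.leadingCoeff f) ≠ 0) :
    m.degree (map φ f) = m.degree f := by
  refine m.toSyn.injective (le_antisymm ?_ (m.le_degree ?_))
  · exact m.degree_le_iff.mpr fun d hd => m.le_degree (support_map_subset φ f hd)
  · rwa [mem_support_iff, coeff_map]

theorem degree_sub_lt_of_coeff_degree_eq {f q : MvPolynomial σ R}
    (hq : m.degree q ≼[m] m.degree f) (hc : q.coeff (m.degree f) = m.leadingCoeff f)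
    (hfq : f - q ≠ 0) : m.degree (f - q) ≺[m] m.degree f := by
  refine lt_of_le_of_ne (m.degree_sub_le.trans (sup_le le_rfl hq)) fun h => ?_
  have hmem := m.degree_mem_support hfq
  rw [m.toSyn.injective h, mem_support_iff, coeff_sub, hc] at hmem
  exact hmem (sub_self _)

theorem degree_sub_monomial_mul_lt {f g : MvPolynomial σ R} {e : R}
    (hdeg : m.degree g ≤ m.degree f) (hlc : m.leadingCoeff f = m.leadingCoeff g * e)
    (hne : f - monomial (m.degree f - m.degree g) e * g ≠ 0) :
    m.degree (f - monomial (m.degree f - m.degree g) e * g) ≺[m] m.degree f := by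
  have hsplit : m.degree f - m.degree g + m.degree g = m.degree f := tsub_add_cancel_of_le hdeg
  refine m.degree_sub_lt_of_coeff_degree_eq ?_ ?_ hne
  · calc m.toSyn (m.degree (monomial (m.degree f - m.degree g) e * g))
        ≤ m.toSyn (m.degree (monomial (m.degree f - m.degree g) e)) + m.toSyn (m.degree g) := by
          rw [← map_add]; exact m.degree_mul_le
      _ ≤ m.toSyn (m.degree f - m.degree g) + m.toSyn (m.degree g) :=
          add_le_add (m.degree_monomial_le e) le_rfl
      _ = m.toSyn (m.degree f) := by rw [← map_add, hsplit]
  · have hcoeff := coeff_monomial_mul (m.degree g) (m.degree f - m.degree g) e g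
    rw [hsplit] at hcoeff
    rw [hcoeff, hlc]
    exact mul_comm _ _

theorem IsGroebnerBasis.exists_degree_map_le {K : Type*} [CommRing K] [NoZeroDivisors K]
    {G : Set (MvPolynomial σ R)} (hG : m.IsGroebnerBasis G) (φ : R →+* K)
    (hφG : ∀ g ∈ G, φ (m.leadingCoeff g) ≠ 0) {f : MvPolynomial σ R} (hf : f ∈ Ideal.span G)
    (hφf : map φ f ≠ 0) : ∃ g ∈ G, m.degree (map φ g) ≤ m.degree (map φ f) := by
  induction hd : m.toSyn (m.degree f) using WellFoundedLT.induction generalizing f with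
  | ind d ih =>
  have hf0 : f ≠ 0 := by rintro rfl; exact hφf (map_zero _)
  obtain ⟨g, hg, hdvd⟩ := hG f hf hf0
  obtain ⟨hdeg | hdeg, e, hlc⟩ := monomial_dvd_monomial.mp hdvd
  · exact absurd hdeg (m.leadingCoeff_ne_zero_iff.mpr hf0)
  by_cases he : φ e = 0
  · set q := monomial (m.degree f - m.degree g) e * g
    have hφfq : map φ (f - q) = map φ f := by simp [q, he]
    have hfq : f - q ≠ 0 := by rintro h; rw [h, map_zero] at hφfq; exact hφf hφfq.symm
    rw [← hφfq]
    exact ih _ (hd ▸ m.degree_sub_monomial_mul_lt hdeg hlc hfq)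
      (sub_mem hf (Ideal.mul_mem_left _ _ (Ideal.subset_span hg))) (hφfq ▸ hφf) rfl
  · have hφlc : φ (m.leadingCoeff f) ≠ 0 := by
      rw [hlc, map_mul]; exact mul_ne_zero (hφG g hg) he
    refine ⟨g, hg, ?_⟩
    rwa [degree_map_of_map_leadingCoeff_ne_zero φ hφlc,
      degree_map_of_map_leadingCoeff_ne_zero φ (hφG g hg)]

end MonomialOrder

namespace MvPolynomial

variable {σ R K : Type*} [CommRing R] [CommRing K] [IsDomain K] (φ : R →+* K)

theorem exists_C_mul_eq_map (hφ : ∀ x : K, ∃ a s, φ s ≠ 0 ∧ φ s * x = φ a)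
    (p : MvPolynomial σ K) :
    ∃ s, φ s ≠ 0 ∧ ∃ f, C (φ s) * p = map φ f := by
  induction p using MvPolynomial.induction_on with
  | C x =>
    obtain ⟨a, s, hs, hx⟩ := hφ x
    exact ⟨s, hs, C a, by rw [map_C, ← C_mul, hx]⟩
  | add p q hp hq =>
    obtain ⟨s, hs, f, hf⟩ := hp
    obtain ⟨t, ht, g, hg⟩ := hq
    refine ⟨s * t, by rw [map_mul]; exact mul_ne_zero hs ht, C t * f + C s * g, ?_⟩
    simp only [map_add, map_mul, map_C, ← hf, ← hg]
    ring
  | mul_X p i hp =>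
    obtain ⟨s, hs, f, hf⟩ := hp
    exact ⟨s, hs, f * X i, by rw [map_mul, map_X, ← hf, mul_assoc]⟩

theorem exists_mem_span_map_eq_C_mul (hφ : ∀ x : K, ∃ a s, φ s ≠ 0 ∧ φ s * x = φ a)
    {G : Set (MvPolynomial σ R)} {p : MvPolynomial σ K}
    (hp : p ∈ Ideal.span (map φ '' G)) :
    ∃ s, φ s ≠ 0 ∧ ∃ f ∈ Ideal.span G, map φ f = C (φ s) * p := by
  induction hp using Submodule.span_induction with
  | mem x hx =>
    obtain ⟨g, hg, rfl⟩ := hx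
    exact ⟨1, by simp, g, Ideal.subset_span hg, by simp⟩
  | zero => exact ⟨1, by simp, 0, zero_mem _, by simp⟩
  | add x y _ _ hx hy =>
    obtain ⟨s, hs, f, hf, hfx⟩ := hx
    obtain ⟨t, ht, g, hg, hgy⟩ := hy
    refine ⟨s * t, by rw [map_mul]; exact mul_ne_zero hs ht, C t * f + C s * g,
      add_mem (Ideal.mul_mem_left _ _ hf) (Ideal.mul_mem_left _ _ hg), ?_⟩
    simp only [map_add, map_mul, map_C, hfx, hgy]
    ring
  | smul r x _ hx =>
    obtain ⟨s, hs, f, hf, hfx⟩ := hx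
    obtain ⟨t, ht, r', hr'⟩ := exists_C_mul_eq_map φ hφ r
    refine ⟨t * s, by rw [map_mul]; exact mul_ne_zero ht hs, r' * f,
      Ideal.mul_mem_left _ _ hf, ?_⟩
    rw [map_mul, ← hr', hfx, smul_eq_mul, map_mul, C_mul]
    ring

end MvPolynomial

namespace Ideal

variable {C : Type*} [CommRing C] (P : Ideal C) [P.IsPrime]

def toResField : C →+* resField P :=
  (algebraMap (C ⧸ P) (resField P)).comp (Ideal.Quotient.mk P)

theorem toResField_eq_zero_iff {c : C} : P.toResField c = 0 ↔ c ∈ P := by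
  rw [toResField, RingHom.comp_apply, IsFractionRing.to_map_eq_zero_iff,
    Ideal.Quotient.eq_zero_iff_mem]

theorem exists_toResField_mul_eq (x : resField P) :
    ∃ a s, P.toResField s ≠ 0 ∧ P.toResField s * x = P.toResField a := by
  obtain ⟨⟨a, s, hs⟩, hx⟩ := IsLocalization.surj (nonZeroDivisors (C ⧸ P)) x
  obtain ⟨a, rfl⟩ := Ideal.Quotient.mk_surjective a
  obtain ⟨s, rfl⟩ := Ideal.Quotient.mk_surjective s
  exact ⟨a, s, IsFractionRing.to_map_ne_zero_of_mem_nonZeroDivisors (R := C ⧸ P) hs,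
    by rw [mul_comm]; exact hx⟩

end Ideal

theorem groebner_basis_specialization {σ : Type*} {C : Type*} [CommRing C]
    (m : MonomialOrder σ) (P : Ideal C) [P.IsPrime]
    (G : Finset (MvPolynomial σ C))
    (hGB : ∀ f ∈ Ideal.span (G : Set (MvPolynomial σ C)), f ≠ 0 →
      ∃ g ∈ G, (monomial (lmon m g) (lcoeff m g) : MvPolynomial σ C) ∣
        monomial (lmon m f) (lcoeff m f))
    (hh : (∏ g ∈ G, lcoeff m g) ∉ P) :
    ∀ p ∈ Ideal.span ((fun g => specialize P g) '' (G : Set (MvPolynomial σ C))),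
      p ≠ 0 → ∃ g ∈ G, lmon m (specialize (σ := σ) P g) ≤ lmon m p := by
  -- `lmon m`, `lcoeff m` and `specialize P` unfold to `m.degree`, `m.leadingCoeff` and
  -- `map P.toResField`, so `hGB` says that `G` is a Gröbner basis in the sense above.
  intro p hp hp0
  have hφG : ∀ g ∈ G, P.toResField (m.leadingCoeff g) ≠ 0 := fun g hg h =>
    hh (Ideal.IsPrime.prod_mem_iff.mpr ⟨g, hg, P.toResField_eq_zero_iff.mp h⟩)
  obtain ⟨s, hs, f, hf, hfp⟩ :=
    exists_mem_span_map_eq_C_mul P.toResField P.exists_toResField_mul_eq hp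
  have hsp : MvPolynomial.C (P.toResField s) * p ≠ 0 := mul_ne_zero (C_ne_zero.mpr hs) hp0
  obtain ⟨g, hg, hle⟩ :=
    MonomialOrder.IsGroebnerBasis.exists_degree_map_le hGB P.toResField hφG hf (hfp ▸ hsp)
  refine ⟨g, hg, ?_⟩
  rwa [hfp, C_mul', m.degree_smul_of_isRegular (IsRegular.of_ne_zero hs)] at hle
end

section
/- Let k ⊆ k' be an extension of fields of characteristic 0 and f ∈ k[x_1,...,x_n] nonzero. Then the Bernstein–Sato polynomial of f computed over k equals the Bernstein–Sato polynomial of f viewed in k'[x_1,...,x_n]: b_f(s) is unchanged under extension of the base field. -/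
open MvPolynomial

noncomputable section BernsteinSato

namespace BS

variable (k : Type*) [Field k] [CharZero k] (n : ℕ)

/-- The fraction field of the polynomial ring `k[x_1, ..., x_n]`. -/
abbrev K := FractionRing (MvPolynomial (Fin n) k)

/-- The canonical map `k[x_1,...,x_n] → K`. -/
abbrev ι : MvPolynomial (Fin n) k →+* K k n :=
  algebraMap (MvPolynomial (Fin n) k) (K k n)

/-- The partial derivative `∂/∂x_i` extended to the fraction field `K` by the
quotient rule `d(a/b) = (b·da - a·db)/b²`. -/
def pd (i : Fin n) (x : K k n) : K k n :=
  let s := IsLocalization.sec (nonZeroDivisors (MvPolynomial (Fin n) k)) x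
  (ι k n (pderiv i s.1) * ι k n (s.2 : MvPolynomial (Fin n) k)
      - ι k n s.1 * ι k n (pderiv i (s.2 : MvPolynomial (Fin n) k)))
    / (ι k n (s.2 : MvPolynomial (Fin n) k)) ^ 2

/-- The coefficientwise extension of `pd i` to `K[s]`. -/
def pdS (i : Fin n) (p : Polynomial (K k n)) : Polynomial (K k n) :=
  p.sum fun j c => Polynomial.C (pd k n i c) * Polynomial.X ^ j

/-- The action of `∂_i` on the module `k[x, 1/f, s]·f^s`, where an element
`p ∈ K[s]` represents `p·f^s` :
`∂_i (p f^s) = ((∂p/∂x_i) + s p (∂f/∂x_i)/f) f^s`. -/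
def Dop (f : MvPolynomial (Fin n) k) (i : Fin n) (p : Polynomial (K k n)) :
    Polynomial (K k n) :=
  pdS k n i p + Polynomial.X * Polynomial.C (ι k n (pderiv i f) / ι k n f) * p

/-- The predicate `InSub f p` says that `p·f^s` belongs to the `A_n(k)[s]`-submodule
of `k[x, 1/f, s]·f^s` generated by `f^{s+1} = f·f^s`; that is, `p·f^s = Q·f^{s+1}`
for some operator `Q ∈ A_n(k)[s]`. The submodule is the closure of `{f·f^s}` under
addition, scalar multiplication by `k`, multiplication by the `x_i`, multiplication
by `s`, and the action of the `∂_i`. -/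
inductive InSub (f : MvPolynomial (Fin n) k) : Polynomial (K k n) → Prop
  | base : InSub f (Polynomial.C (ι k n f))
  | add {p q} : InSub f p → InSub f q → InSub f (p + q)
  | smul (c : k) {p} : InSub f p →
      InSub f (Polynomial.C (ι k n (MvPolynomial.C c)) * p)
  | mulX (i : Fin n) {p} : InSub f p →
      InSub f (Polynomial.C (ι k n (MvPolynomial.X i)) * p)
  | mulS {p} : InSub f p → InSub f (Polynomial.X * p)
  | diff (i : Fin n) {p} : InSub f p → InSub f (Dop k n f i p)

/-- `J(f)`: the set of polynomials `b(s) ∈ k[s]` for which there exists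
`Q ∈ A_n(k)[s]` with `b(s)·f^s = Q·f^{s+1}`. -/
def bsSet (f : MvPolynomial (Fin n) k) : Set (Polynomial k) :=
  {b | InSub k n f (b.map ((ι k n).comp (MvPolynomial.C)))}

/-- `b` is the Bernstein–Sato polynomial of `f`: the monic generator of the
ideal `J(f)` of polynomials satisfying the functional equation. -/
def IsBernsteinSato (f : MvPolynomial (Fin n) k) (b : Polynomial k) : Prop :=
  b.Monic ∧ b ∈ bsSet k n f ∧ ∀ c ∈ bsSet k n f, b ∣ c

end BS

end BernsteinSato

/-!
Extending scalars turns a functional equation over `k` into one over `k'`, so `b'' ∣ b`.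
Conversely, the `A_n(k')[s]`-module generated by `f^{s+1}` is the `k'`-span of the one over `k`.
Since `k'` and `k(x₁, …, xₙ)` are linearly disjoint over `k`, applying any `k`-linear functional
`π : k' → k` to the coefficients of `b''` gives a functional equation over `k`; hence `b` divides
every `π(b'')`, which forces `b ∣ b''`.
-/

open scoped Polynomial

namespace Polynomial

variable {k k' : Type*} [Field k] [CommRing k'] [Algebra k k']

noncomputable def mapDual (π : k' →ₗ[k] k) (p : k'[X]) : k[X] :=
  ∑ j ∈ p.support, monomial j (π (p.coeff j))

@[simp]
theorem coeff_mapDual (π : k' →ₗ[k] k) (p : k'[X]) (j : ℕ) :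
    (p.mapDual π).coeff j = π (p.coeff j) := by
  simp only [mapDual, finsetSum_coeff, coeff_monomial, Finset.sum_ite_eq']
  split_ifs with h
  · rfl
  · rw [notMem_support_iff.mp h, map_zero]

theorem mapDual_add (π : k' →ₗ[k] k) (p q : k'[X]) :
    (p + q).mapDual π = p.mapDual π + q.mapDual π := by
  ext j; simp

theorem mapDual_map_mul (π : k' →ₗ[k] k) (u : k[X]) (p : k'[X]) :
    (u.map (algebraMap k k') * p).mapDual π = u * p.mapDual π := by
  ext j
  simp only [coeff_mapDual, coeff_mul, coeff_map, map_sum, ← Algebra.smul_def, map_smul,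
    smul_eq_mul]

theorem degree_mapDual_le (π : k' →ₗ[k] k) (p : k'[X]) : (p.mapDual π).degree ≤ p.degree := by
  rw [degree_le_iff_coeff_zero]
  intro j hj
  rw [coeff_mapDual, coeff_eq_zero_of_degree_lt hj, map_zero]

/-- For degree reasons every `mapDual π` kills the remainder of `p` modulo `b`, and the
functionals `π` separate points. -/
theorem map_dvd_of_forall_dvd_mapDual [Nontrivial k'] {b : k[X]} (hb : b.Monic) {p : k'[X]}
    (h : ∀ π : k' →ₗ[k] k, b ∣ p.mapDual π) : b.map (algebraMap k k') ∣ p := by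
  have hb' := hb.map (algebraMap k k')
  rw [← modByMonic_eq_zero_iff_dvd hb']
  have hdiv := modByMonic_add_div p (b.map (algebraMap k k'))
  have hrem (π : k' →ₗ[k] k) : (p %ₘ b.map (algebraMap k k')).mapDual π = 0 := by
    have hdvd := h π
    rw [← hdiv, mapDual_add, mapDual_map_mul] at hdvd
    refine eq_zero_of_dvd_of_degree_lt ((dvd_add_left (dvd_mul_right _ _)).mp hdvd) ?_
    calc _ ≤ (p %ₘ b.map (algebraMap k k')).degree := degree_mapDual_le π _
      _ < (b.map (algebraMap k k')).degree := degree_modByMonic_lt _ hb'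
      _ = b.degree := hb.degree_map _
  ext j
  refine (Module.forall_dual_apply_eq_zero_iff k _).mp fun π => ?_
  simpa using congrArg (coeff · j) (hrem π)

end Polynomial

namespace MvPolynomial

variable {k k' σ ι : Type*} [Field k] [CommRing k'] [Algebra k k']

theorem dual_smul_eq_sum_of_smul_map_eq_sum (π : k' →ₗ[k] k) (s : Finset ι) (c : ι → k')
    (a : ι → MvPolynomial σ k) (e : k') (d : MvPolynomial σ k)
    (h : e • map (algebraMap k k') d = ∑ i ∈ s, c i • map (algebraMap k k') (a i)) :
    π e • d = ∑ i ∈ s, π (c i) • a i := by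
  ext m
  have hm := congrArg (fun P => π (coeff m P)) h
  simp only [coeff_smul, coeff_sum, coeff_map, smul_eq_mul, map_sum,
    mul_comm _ (algebraMap k k' _), ← Algebra.smul_def, map_smul] at hm
  simpa only [smul_eq_mul, coeff_smul, coeff_sum, mul_comm] using hm

end MvPolynomial

namespace BS

section Derivative

variable {k : Type*} [Field k] {n : ℕ}

theorem ι_injective : Function.Injective (ι k n) := IsFractionRing.injective _ _

theorem ι_ne_zero {a : MvPolynomial (Fin n) k} (ha : a ≠ 0) : ι k n a ≠ 0 :=
  (map_ne_zero_iff _ ι_injective).mpr ha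

theorem ι_C (c : k) : ι k n (C c) = algebraMap k (K k n) c := by
  rw [IsScalarTower.algebraMap_apply k (MvPolynomial (Fin n) k) (K k n), algebraMap_eq]

theorem ι_smul (r : k) (P : MvPolynomial (Fin n) k) : ι k n (r • P) = r • ι k n P := by
  rw [smul_eq_C_mul, map_mul, ι_C, Algebra.smul_def]

theorem C_ι_C_mul (c : k) (p : (K k n)[X]) : Polynomial.C (ι k n (C c)) * p = c • p := by
  rw [ι_C, ← Polynomial.smul_eq_C_mul, algebraMap_smul]

theorem pd_div (i : Fin n) {a b : MvPolynomial (Fin n) k} (hb : b ≠ 0) :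
    pd k n i (ι k n a / ι k n b) =
      (ι k n (pderiv i a) * ι k n b - ι k n a * ι k n (pderiv i b)) / ι k n b ^ 2 := by
  have hsec := IsLocalization.sec_spec (M := nonZeroDivisors (MvPolynomial (Fin n) k))
    (ι k n a / ι k n b)
  unfold pd
  generalize IsLocalization.sec (nonZeroDivisors (MvPolynomial (Fin n) k)) (ι k n a / ι k n b)
    = s at hsec ⊢
  obtain ⟨a₀, b₀, hb₀⟩ := s
  have hb₀ : b₀ ≠ 0 := nonZeroDivisors.ne_zero hb₀
  have cross : a * b₀ = a₀ * b := ι_injective <| by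
    simp only [map_mul]
    field_simp [ι_ne_zero hb] at hsec
    linear_combination hsec
  have cross' := congrArg (ι k n) (congrArg (pderiv i) cross)
  have cross := congrArg (ι k n) cross
  simp only [pderiv_mul, map_add, map_mul] at cross cross' ⊢
  rw [div_eq_div_iff (pow_ne_zero _ (ι_ne_zero hb₀)) (pow_ne_zero _ (ι_ne_zero hb))]
  linear_combination (ι k n (pderiv i b₀) * ι k n b + ι k n (pderiv i b) * ι k n b₀) * cross
    - (ι k n b * ι k n b₀) * cross'

theorem pd_add (i : Fin n) (x y : K k n) : pd k n i (x + y) = pd k n i x + pd k n i y := by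
  obtain ⟨a, b, hb, rfl⟩ := IsFractionRing.div_surjective (MvPolynomial (Fin n) k) x
  obtain ⟨c, d, hd, rfl⟩ := IsFractionRing.div_surjective (MvPolynomial (Fin n) k) y
  replace hb := nonZeroDivisors.ne_zero hb
  replace hd := nonZeroDivisors.ne_zero hd
  have hsum : ι k n a / ι k n b + ι k n c / ι k n d = ι k n (a * d + c * b) / ι k n (b * d) := by
    rw [div_add_div _ _ (ι_ne_zero hb) (ι_ne_zero hd)]
    simp only [map_add, map_mul, mul_comm]
  rw [hsum, pd_div i (mul_ne_zero hb hd), pd_div i hb, pd_div i hd]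
  simp only [map_add, pderiv_mul, map_mul]
  field_simp [ι_ne_zero hb, ι_ne_zero hd]
  ring

theorem pd_smul (i : Fin n) (c : k) (x : K k n) : pd k n i (c • x) = c • pd k n i x := by
  obtain ⟨a, b, hb, rfl⟩ := IsFractionRing.div_surjective (MvPolynomial (Fin n) k) x
  replace hb := nonZeroDivisors.ne_zero hb
  have hsmul : c • (ι k n a / ι k n b) = ι k n (C c * a) / ι k n b := by
    rw [Algebra.smul_def, ← ι_C, map_mul, mul_div_assoc]
  rw [hsmul, pd_div i hb, pd_div i hb, pderiv_C_mul, Algebra.smul_def, ← ι_C]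
  simp only [map_mul]
  ring

theorem pd_zero (i : Fin n) : pd k n i 0 = 0 := by
  simpa using pd_add i (0 : K k n) 0

theorem coeff_pdS (i : Fin n) (p : (K k n)[X]) (j : ℕ) :
    (pdS k n i p).coeff j = pd k n i (p.coeff j) := by
  simp only [pdS, Polynomial.sum_def, Polynomial.finsetSum_coeff, Polynomial.coeff_C_mul,
    Polynomial.coeff_X_pow, mul_ite, mul_one, mul_zero, Finset.sum_ite_eq]
  split_ifs with h
  · rfl
  · rw [Polynomial.notMem_support_iff.mp h, pd_zero]

noncomputable def DopLinear (f : MvPolynomial (Fin n) k) (i : Fin n) :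
    (K k n)[X] →ₗ[k] (K k n)[X] where
  toFun := Dop k n f i
  map_add' p q := by
    have : pdS k n i (p + q) = pdS k n i p + pdS k n i q := by
      ext j; simp only [coeff_pdS, Polynomial.coeff_add, pd_add]
    simp only [Dop, this]; ring
  map_smul' c p := by
    have : pdS k n i (c • p) = c • pdS k n i p := by
      ext j; simp only [coeff_pdS, Polynomial.coeff_smul, pd_smul]
    simp only [Dop, this, RingHom.id_apply, smul_add, mul_smul_comm]

end Derivative

section BaseChange

variable {k : Type*} [Field k] {k' : Type*} [Field k'] [Algebra k k'] {n : ℕ}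

variable (k') in
noncomputable abbrev fracMap : K k n →+* K k' n :=
  IsFractionRing.map (j := MvPolynomial.map (σ := Fin n) (algebraMap k k'))
    (map_injective _ (algebraMap k k').injective)

theorem fracMap_ι (a : MvPolynomial (Fin n) k) :
    fracMap k' (ι k n a) = ι k' n (MvPolynomial.map (algebraMap k k') a) :=
  IsLocalization.map_eq (S := K k n) _ _

theorem fracMap_pd (i : Fin n) (x : K k n) :
    fracMap k' (pd k n i x) = pd k' n i (fracMap k' x) := by
  obtain ⟨a, b, hb, rfl⟩ := IsFractionRing.div_surjective (MvPolynomial (Fin n) k) x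
  replace hb := nonZeroDivisors.ne_zero hb
  have hb' : MvPolynomial.map (algebraMap k k') b ≠ 0 :=
    (map_ne_zero_iff _ (map_injective _ (algebraMap k k').injective)).mpr hb
  simp only [pd_div i hb, map_div₀, map_sub, map_mul, map_pow, fracMap_ι, pd_div i hb',
    pderiv_map]

theorem Dop_map (f : MvPolynomial (Fin n) k) (i : Fin n) (p : (K k n)[X]) :
    (Dop k n f i p).map (fracMap k') =
      Dop k' n (MvPolynomial.map (algebraMap k k') f) i (p.map (fracMap k')) := by
  have hpdS : (pdS k n i p).map (fracMap k') = pdS k' n i (p.map (fracMap k')) := by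
    ext j; simp only [Polynomial.coeff_map, coeff_pdS, fracMap_pd]
  simp only [Dop, Polynomial.map_add, Polynomial.map_mul, Polynomial.map_C, Polynomial.map_X,
    hpdS, map_div₀, fracMap_ι, pderiv_map]

theorem InSub.map {f : MvPolynomial (Fin n) k} {p : (K k n)[X]} (h : InSub k n f p) :
    InSub k' n (MvPolynomial.map (algebraMap k k') f) (p.map (fracMap k')) := by
  induction h with
  | base => rw [Polynomial.map_C, fracMap_ι]; exact .base
  | add _ _ hp hq => rw [Polynomial.map_add]; exact hp.add hq
  | smul c _ hp =>
    rw [Polynomial.map_mul, Polynomial.map_C, fracMap_ι, map_C]; exact hp.smul _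
  | mulX i _ hp =>
    rw [Polynomial.map_mul, Polynomial.map_C, fracMap_ι, map_X]; exact hp.mulX i
  | mulS _ hp => rw [Polynomial.map_mul, Polynomial.map_X]; exact hp.mulS
  | diff i _ hp => rw [Dop_map]; exact hp.diff i

theorem map_mem_bsSet {f : MvPolynomial (Fin n) k} {b : k[X]} (hb : b ∈ bsSet k n f) :
    b.map (algebraMap k k') ∈ bsSet k' n (MvPolynomial.map (algebraMap k k') f) := by
  have hcomp : ((ι k' n).comp C).comp (algebraMap k k') = (fracMap k').comp ((ι k n).comp C) := by
    ext c; simp only [RingHom.comp_apply, fracMap_ι, map_C]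
  simpa only [bsSet, Set.mem_ofPred_eq, Polynomial.map_map, hcomp] using hb.map

theorem InSub.mem_span_map {f : MvPolynomial (Fin n) k} {p : (K k' n)[X]}
    (h : InSub k' n (MvPolynomial.map (algebraMap k k') f) p) :
    p ∈ Submodule.span k' (Polynomial.map (fracMap k') '' {q | InSub k n f q}) := by
  set S := Submodule.span k' (Polynomial.map (fracMap k') '' {q | InSub k n f q})
  have stable (L : (K k' n)[X] →ₗ[k'] (K k' n)[X])
      (hL : ∀ q, InSub k n f q →
        ∃ q', InSub k n f q' ∧ L (q.map (fracMap k')) = q'.map (fracMap k'))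
      {p} (hp : p ∈ S) : L p ∈ S := by
    refine Submodule.span_le (p := S.comap L) |>.mpr ?_ hp
    rintro _ ⟨q, hq, rfl⟩
    obtain ⟨q', hq', hL⟩ := hL q hq
    exact Submodule.subset_span ⟨q', hq', hL.symm⟩
  induction h with
  | base => exact Submodule.subset_span ⟨_, .base, by rw [Polynomial.map_C, fracMap_ι]⟩
  | add _ _ hp hq => exact S.add_mem hp hq
  | smul c _ hp => rw [C_ι_C_mul]; exact S.smul_mem c hp
  | mulX i _ hp =>
    refine stable (LinearMap.mulLeft k' _) (fun q hq => ⟨_, hq.mulX i, ?_⟩) hp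
    rw [LinearMap.mulLeft_apply, Polynomial.map_mul, Polynomial.map_C, fracMap_ι, map_X]
  | mulS _ hp =>
    refine stable (LinearMap.mulLeft k' Polynomial.X) (fun q hq => ⟨_, hq.mulS, ?_⟩) hp
    rw [LinearMap.mulLeft_apply, Polynomial.map_mul, Polynomial.map_X]
  | diff i _ hp =>
    exact stable (DopLinear _ i) (fun q hq => ⟨_, hq.diff i, (Dop_map f i q).symm⟩) hp

/-- Clearing denominators reduces this to polynomials, where `π` can be applied
coefficientwise. -/
theorem algebraMap_dual_eq_sum_of_eq_sum_fracMap (π : k' →ₗ[k] k) {m : ℕ} (c : Fin m → k')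
    (g : Fin m → K k n) (e : k') (h : algebraMap k' (K k' n) e = ∑ i, c i • fracMap k' (g i)) :
    algebraMap k (K k n) (π e) = ∑ i, π (c i) • g i := by
  obtain ⟨d, hd⟩ :=
    IsLocalization.exist_integer_multiples_of_finite (nonZeroDivisors (MvPolynomial (Fin n) k)) g
  choose a ha using hd
  have hd0 := nonZeroDivisors.ne_zero d.2
  have hg (i : Fin m) : g i = ι k n (a i) / ι k n d := by
    rw [eq_div_iff (ι_ne_zero hd0), ha i, Algebra.smul_def, mul_comm]
  have hd0' : MvPolynomial.map (algebraMap k k') (d : MvPolynomial (Fin n) k) ≠ 0 :=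
    (map_ne_zero_iff _ (map_injective _ (algebraMap k k').injective)).mpr hd0
  simp only [hg, map_div₀, fracMap_ι, ← smul_div_assoc, ← Finset.sum_div] at h ⊢
  rw [eq_div_iff (ι_ne_zero hd0')] at h
  rw [eq_div_iff (ι_ne_zero hd0)]
  have hpoly : e • MvPolynomial.map (algebraMap k k') (d : MvPolynomial (Fin n) k) =
      ∑ i, c i • MvPolynomial.map (algebraMap k k') (a i) :=
    ι_injective <| by
      simp only [map_sum, ι_smul]
      simpa only [Algebra.smul_def] using h
  have := congrArg (ι k n) (dual_smul_eq_sum_of_smul_map_eq_sum π _ c a e d hpoly)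
  simp only [map_sum, ι_smul] at this
  simpa only [Algebra.smul_def] using this

end BaseChange

variable {k : Type*} [Field k] {n : ℕ}

variable (k n) in
noncomputable def inSubSubmodule (f : MvPolynomial (Fin n) k) : Submodule k (K k n)[X] where
  carrier := {p | InSub k n f p}
  add_mem' := InSub.add
  zero_mem' := by simpa using InSub.smul (0 : k) (InSub.base (f := f))
  smul_mem' c _ hp := by rw [← C_ι_C_mul]; exact hp.smul c

theorem mapDual_mem_bsSet {k' : Type*} [Field k'] [Algebra k k'] (π : k' →ₗ[k] k)
    {f : MvPolynomial (Fin n) k} {p : k'[X]}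
    (hp : p ∈ bsSet k' n (MvPolynomial.map (algebraMap k k') f)) : p.mapDual π ∈ bsSet k n f := by
  obtain ⟨m, c, g, hg⟩ := Submodule.mem_span_set'.mp (InSub.mem_span_map hp)
  choose q hq hqg using fun i => (g i).2
  have hrep : (p.mapDual π).map ((ι k n).comp C) = ∑ i, π (c i) • q i := by
    ext j
    have hj := congrArg (Polynomial.coeff · j) hg
    simp only [Polynomial.finsetSum_coeff, Polynomial.coeff_smul, Polynomial.coeff_map,
      RingHom.comp_apply, ← hqg] at hj ⊢
    rw [Polynomial.coeff_mapDual, ι_C]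
    exact algebraMap_dual_eq_sum_of_eq_sum_fracMap π c _ _ (by rw [← ι_C, hj])
  show InSub k n f _
  rw [hrep]
  exact Submodule.sum_mem (inSubSubmodule k n f) fun i _ => Submodule.smul_mem _ _ (hq i)

end BS

theorem bernsteinSato_base_change_general
    (k : Type*) [Field k]
    (k' : Type*) [Field k'] [Algebra k k'] (n : ℕ)
    (f : MvPolynomial (Fin n) k)
    (b : Polynomial k)
    (b'' : Polynomial k')
    (hb : BS.IsBernsteinSato k n f b)
    (hb'' : BS.IsBernsteinSato k' n (MvPolynomial.map (algebraMap k k') f) b'') :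
    b'' = b.map (algebraMap k k') := by
  have hdvd : b'' ∣ b.map (algebraMap k k') := hb''.2.2 _ (BS.map_mem_bsSet hb.2.1)
  have hdvd' : b.map (algebraMap k k') ∣ b'' :=
    Polynomial.map_dvd_of_forall_dvd_mapDual hb.1 fun π =>
      hb.2.2 _ (BS.mapDual_mem_bsSet π hb''.2.1)
  exact Polynomial.eq_of_monic_of_associated hb''.1 (hb.1.map _)
    (associated_of_dvd_dvd hdvd hdvd')

theorem bernsteinSato_base_change
    (k : Type*) [Field k] [CharZero k]
    (k' : Type*) [Field k'] [CharZero k'] [Algebra k k'] (n : ℕ)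
    (f : MvPolynomial (Fin n) k) (hf : f ≠ 0)
    (b : Polynomial k)
    (b'' : Polynomial k')
    (hb : BS.IsBernsteinSato k n f b)
    (hb'' : BS.IsBernsteinSato k' n (MvPolynomial.map (algebraMap k k') f) b'') :
    b'' = b.map (algebraMap k k') :=
  bernsteinSato_base_change_general k k' n f b b'' hb hb''
end
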